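/- Let G be a finite group and H₁, …, H_k subgroups of G such that G = H₁ ∪ ⋯ ∪ H_k and H_i ∩ H_j = {1} for all i ≠ j. Then in the rational group ring ℚ[G], |G|·ε_G + (k−1)·ε_{1} = Σᵢ |Hᵢ|·ε_{Hᵢ}, where ε_H = |H|⁻¹ Σ_{h∈H} h is the idempotent attached to a subgroup H. -/

import Mathlib

/-!
Since `|H| • ε_H = ∑_{h ∈ H} h`, the identity can be checked coefficientwise: every
non-identity element of `G` lies in exactly one `Hᵢ`, while the identity lies in all `k` of them.
-/

open scoped Classical

/-- The idempotent `ε_H = |H|⁻¹ ∑_{h ∈ H} h` attached to a subgroup `H` in `ℚ[G]`. -/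
noncomputable def subgroupIdempotent {G : Type*} [Group G] [Fintype G]
    (H : Subgroup G) : MonoidAlgebra ℚ G :=
  (Nat.card H : ℚ)⁻¹ • ∑ h : H, MonoidAlgebra.single (h : G) (1 : ℚ)

open MonoidAlgebra

section

variable {G : Type*} [Group G]

lemma sum_ite_mem_of_cover_of_inf_eq_bot {ι : Type*} [Fintype ι] (Hs : ι → Subgroup G)
    (hcover : ∀ g : G, ∃ i, g ∈ Hs i) (hdisj : ∀ i j, i ≠ j → Hs i ⊓ Hs j = ⊥) (a : G) :
    ∑ i, (if a ∈ Hs i then (1 : ℚ) else 0) = if a = 1 then (Fintype.card ι : ℚ) else 1 := by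
  split_ifs with ha
  · simp [ha]
  · obtain ⟨i, hi⟩ := hcover a
    rw [Fintype.sum_eq_single i fun j hji => if_neg fun hj => ha ?_, if_pos hi]
    simpa [hdisj j i hji] using Subgroup.mem_inf.mpr ⟨hj, hi⟩

variable [Fintype G]

lemma card_smul_subgroupIdempotent (H : Subgroup G) :
    (Nat.card H : ℚ) • subgroupIdempotent H = ∑ h : H, single (h : G) (1 : ℚ) := by
  rw [subgroupIdempotent, smul_smul, mul_inv_cancel₀ (by exact_mod_cast Nat.card_pos.ne'),
    one_smul]

lemma coeff_sum_single_subgroup (H : Subgroup G) (a : G) :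
    (∑ h : H, single (h : G) (1 : ℚ)).coeff a = if a ∈ H then 1 else 0 := by
  simp only [coeff_sum, Finset.sum_apply', coeff_single, Finsupp.single_apply]
  split_ifs with ha
  · rw [Fintype.sum_eq_single ⟨a, ha⟩ fun h hh => if_neg fun e => hh (Subtype.ext e), if_pos rfl]
  · exact Finset.sum_eq_zero fun h _ => if_neg fun (e : (h : G) = a) => ha (e ▸ h.2)

lemma subgroupIdempotent_bot : subgroupIdempotent (⊥ : Subgroup G) = 1 := by
  simp [subgroupIdempotent, one_def, Subgroup.mem_bot.mp (default : (⊥ : Subgroup G)).2]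

end

theorem partition_idempotent_relation {G : Type*} [Group G] [Fintype G]
    (k : ℕ) (Hs : Fin k → Subgroup G)
    (hcover : ∀ g : G, ∃ i, g ∈ Hs i)
    (hdisj : ∀ i j, i ≠ j → Hs i ⊓ Hs j = ⊥) :
    (Nat.card G : ℚ) • subgroupIdempotent (⊤ : Subgroup G)
        + ((k : ℚ) - 1) • subgroupIdempotent (⊥ : Subgroup G)
      = ∑ i : Fin k, (Nat.card (Hs i) : ℚ) • subgroupIdempotent (Hs i) := by
  rw [← Subgroup.card_top, card_smul_subgroupIdempotent, subgroupIdempotent_bot]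
  simp_rw [card_smul_subgroupIdempotent]
  ext a
  rw [coeff_add, Finsupp.add_apply, coeff_sum_single_subgroup, coeff_smul_apply, coeff_sum,
    Finset.sum_apply']
  simp_rw [coeff_sum_single_subgroup]
  rw [sum_ite_mem_of_cover_of_inf_eq_bot Hs hcover hdisj, Fintype.card_fin]
  by_cases ha : a = 1 <;> simp [ha, one_def]
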